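/- arXiv:1701.04950 — 6 statements merged into one kernel-verified Lean document; each statement's English description precedes it below -/
import Mathlib

section
/- Assume L is symmetric (L(x, x̂) = L(x̂, x)) and satisfies L(x, x̂) ≤ L(x, x̃) + L(x̃, x̂). If a stochastic decision is made with the a posteriori distribution itself, i.e., q(x̂|y) = p_{X|Y}(x̂|y), then its risk is at most twice the optimal risk: Risk(p_{X|Y}) ≤ 2 · Risk(f_MAL). -/
/-- For a symmetric subadditive loss, the risk of the stochastic decision with
the a posteriori distribution is at most twice the optimal risk. -/
theorem risk_posterior_le_two_mul_risk_fMAL {X Y : Type*} [Countable X] [Countable Y]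
    (pY : Y → ℝ) (pXY : Y → X → ℝ) (L : X → X → ℝ)
    (hpY0 : ∀ y, 0 ≤ pY y) (hpY1 : HasSum pY 1)
    (hpXY0 : ∀ y x, 0 ≤ pXY y x) (hpXY1 : ∀ y, HasSum (pXY y) 1)
    (hLsym : ∀ x x', L x x' = L x' x)
    (hLsub : ∀ x xt x', L x x' ≤ L x xt + L xt x')
    (fMAL : Y → X)
    (hMAL : ∀ y x', ∑' x, pXY y x * L x (fMAL y) ≤ ∑' x, pXY y x * L x x') :
    ∑' y, pY y * ∑' x', pXY y x' * ∑' x, pXY y x * L x x'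
      ≤ 2 * ∑' y, pY y * ∑' x, pXY y x * L x (fMAL y) := by
  -- L is nonnegative
  have hL0 : ∀ x x', 0 ≤ L x x' := by
    intro x x'
    have h1 : (0:ℝ) ≤ L x x := by
      have := hLsub x x x; linarith
    have h2 : L x x ≤ L x x' + L x' x := hLsub x x' x
    rw [hLsym x' x] at h2
    linarith
  set a : Y → ℝ := fun y => ∑' x, pXY y x * L x (fMAL y) with ha
  set i : Y → ℝ := fun y => ∑' x', pXY y x' * ∑' x, pXY y x * L x x' with hi
  have ha0 : ∀ y, 0 ≤ a y := fun y =>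
    tsum_nonneg (fun x => mul_nonneg (hpXY0 y x) (hL0 x (fMAL y)))
  -- key per-y bounds: a y ≤ i y ∧ i y ≤ 2 * a y
  have key : ∀ y, a y ≤ i y ∧ i y ≤ 2 * a y := by
    intro y
    set p : X → ℝ := fun x => pXY y x with hp
    set c : X := fMAL y with hc
    by_cases hs : Summable (fun x => p x * L x c)
    · -- summable case
      have hAsum : HasSum (fun x => p x * L x c) (a y) := hs.hasSum
      -- For each x', the inner sum is summable and bounded
      have hSsum : ∀ x', Summable (fun x => p x * L x x') := by
        intro x'
        refine Summable.of_nonneg_of_le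
          (fun x => mul_nonneg (hpXY0 y x) (hL0 x x'))
          (fun x => ?_) (hs.add ((hpXY1 y).summable.mul_right (L c x')))
        calc p x * L x x' ≤ p x * (L x c + L c x') :=
              mul_le_mul_of_nonneg_left (hLsub x c x') (hpXY0 y x)
          _ = p x * L x c + p x * L c x' := by ring
      have hSle : ∀ x', (∑' x, p x * L x x') ≤ a y + L c x' := by
        intro x'
        have h2 : HasSum (fun x => p x * L x c + p x * L c x') (a y + L c x') := by
          have := (hpXY1 y).mul_right (L c x')
          rw [one_mul] at this
          exact hAsum.add this
        refine le_trans (Summable.tsum_le_tsum (fun x => ?_) (hSsum x') h2.summable) h2.tsum_eq.le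
        calc p x * L x x' ≤ p x * (L x c + L c x') :=
              mul_le_mul_of_nonneg_left (hLsub x c x') (hpXY0 y x)
          _ = p x * L x c + p x * L c x' := by ring
      -- the outer (x') sums
      have hub : HasSum (fun x' => p x' * (a y) + p x' * L x' c) (a y + a y) := by
        have h1 : HasSum (fun x' => p x' * a y) (a y) := by
          have := (hpXY1 y).mul_right (a y); rwa [one_mul] at this
        exact h1.add hAsum
      have hub' : ∀ x', p x' * (∑' x, p x * L x x') ≤ p x' * a y + p x' * L x' c := by
        intro x'
        calc p x' * (∑' x, p x * L x x') ≤ p x' * (a y + L c x') :=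
              mul_le_mul_of_nonneg_left (hSle x') (hpXY0 y x')
          _ = p x' * a y + p x' * L c x' := by ring
          _ = p x' * a y + p x' * L x' c := by rw [hLsym c x']
      have hf2sum : Summable (fun x' => p x' * (∑' x, p x * L x x')) := by
        refine Summable.of_nonneg_of_le (fun x' => mul_nonneg (hpXY0 y x')
          (tsum_nonneg (fun x => mul_nonneg (hpXY0 y x) (hL0 x x')))) hub' hub.summable
      constructor
      · -- a y ≤ i y
        have h1 : HasSum (fun x' => p x' * a y) (a y) := by
          have := (hpXY1 y).mul_right (a y); rwa [one_mul] at this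
        refine le_trans (le_of_eq h1.tsum_eq.symm) (Summable.tsum_le_tsum (fun x' => ?_)
          h1.summable hf2sum)
        exact mul_le_mul_of_nonneg_left (hMAL y x') (hpXY0 y x')
      · -- i y ≤ 2 * a y
        have := Summable.tsum_le_tsum hub' hf2sum hub.summable
        rw [hub.tsum_eq] at this
        calc i y ≤ a y + a y := this
          _ = 2 * a y := by ring
    · -- non-summable case: a y = 0 and all inner sums vanish
      have hA0 : a y = 0 := tsum_eq_zero_of_not_summable hs
      have hSnot : ∀ x', ¬ Summable (fun x => p x * L x x') := by
        intro x' hsum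
        apply hs
        refine Summable.of_nonneg_of_le
          (fun x => mul_nonneg (hpXY0 y x) (hL0 x c)) (fun x => ?_)
          (hsum.add ((hpXY1 y).summable.mul_right (L x' c)))
        calc p x * L x c ≤ p x * (L x x' + L x' c) :=
              mul_le_mul_of_nonneg_left (hLsub x x' c) (hpXY0 y x)
          _ = p x * L x x' + p x * L x' c := by ring
      have hI0 : i y = 0 := by
        have : (fun x' => p x' * ∑' x, p x * L x x') = fun _ => (0:ℝ) := by
          funext x'
          rw [tsum_eq_zero_of_not_summable (hSnot x'), mul_zero]
        simp only [hi, hp]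
        rw [show (fun x' => pXY y x' * ∑' x, pXY y x * L x x') = fun _ => (0:ℝ) from this]
        exact tsum_zero
      rw [hA0, hI0]; norm_num
  -- outer sum
  have hG0 : ∀ y, 0 ≤ pY y * a y := fun y => mul_nonneg (hpY0 y) (ha0 y)
  have hGF : ∀ y, pY y * a y ≤ pY y * i y := fun y =>
    mul_le_mul_of_nonneg_left (key y).1 (hpY0 y)
  have hFU : ∀ y, pY y * i y ≤ 2 * (pY y * a y) := by
    intro y
    calc pY y * i y ≤ pY y * (2 * a y) := mul_le_mul_of_nonneg_left (key y).2 (hpY0 y)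
      _ = 2 * (pY y * a y) := by ring
  by_cases hG : Summable (fun y => pY y * a y)
  · have hU : Summable (fun y => 2 * (pY y * a y)) := hG.mul_left 2
    have hF : Summable (fun y => pY y * i y) :=
      Summable.of_nonneg_of_le (fun y => le_trans (hG0 y) (hGF y)) hFU hU
    calc (∑' y, pY y * i y) ≤ ∑' y, 2 * (pY y * a y) := Summable.tsum_le_tsum hFU hF hU
      _ = 2 * ∑' y, pY y * a y := tsum_mul_left
  · have hF : ¬ Summable (fun y => pY y * i y) := by
      intro hF
      exact hG (Summable.of_nonneg_of_le hG0 hGF hF)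
    rw [tsum_eq_zero_of_not_summable hF, tsum_eq_zero_of_not_summable hG]
    norm_num
end

section
/- Assume L ≥ 0 with L̄ = sup L finite, and suppose X̂₁, …, X̂_{t̄} are i.i.d. with distribution q(·|y) given Y = y, conditionally independent of X. Let F(y) minimize Σ_x p_{X|Y}(x|y) L(x, x̂) over x̂ ∈ {X̂₁, …, X̂_{t̄}}. Then Risk(F) ≤ Risk(f_MAL) + L̄ · Σ_y p_Y(y) · (1 − q(f_MAL(y)|y))^{t̄}. -/
open Function

/-- Sum over tuples of a product of nonneg summable functions. -/
lemma hasSum_pi_prod {X : Type*} [Countable X] (f : X → ℝ) (hf0 : ∀ x, 0 ≤ f x) {s : ℝ}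
    (hf : HasSum f s) (n : ℕ) :
    HasSum (fun xs : Fin n → X => ∏ t, f (xs t)) (s ^ n) := by
  induction n with
  | zero =>
    haveI : Unique (Fin 0 → X) := ⟨⟨Fin.elim0⟩, fun g => funext fun i => i.elim0⟩
    have h1 : (fun xs : Fin 0 → X => ∏ t, f (xs t)) = fun _ => (1 : ℝ) := by
      funext xs; simp
    rw [h1, pow_zero]
    simpa using hasSum_single (f := fun _ : Fin 0 → X => (1 : ℝ)) default
      (fun b hb => absurd (Subsingleton.elim b default) hb)
  | succ n ih =>
    have hprodnn : ∀ xs : Fin n → X, 0 ≤ ∏ t, f (xs t) :=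
      fun xs => Finset.prod_nonneg fun t _ => hf0 _
    have hsummable : Summable (fun p : X × (Fin n → X) => f p.1 * ∏ t, f (p.2 t)) :=
      Summable.mul_of_nonneg (f := f) (g := fun xs : Fin n → X => ∏ t, f (xs t))
        hf.summable ih.summable hf0 hprodnn
    have hm := HasSum.mul (α := ℝ) hf ih hsummable
    rw [pow_succ, mul_comm (s ^ n) s,
      ← (Fin.consEquiv (fun _ : Fin (n + 1) => X)).hasSum_iff]
    convert hm using 1
    · rfl
    funext p
    simp [Fin.consEquiv, Fin.prod_univ_succ]

/-- For a nonnegative bounded loss and an i.i.d. random sequence, the risk of the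
stochastic decision minimizing the average loss over the sequence approaches the
optimal risk exponentially. -/
theorem risk_seq_iid_le {X Y : Type*} [Countable X] [Countable Y]
    (pY : Y → ℝ) (pXY : Y → X → ℝ) (L : X → X → ℝ) (Lbar : ℝ) (tbar : ℕ)
    (hpY0 : ∀ y, 0 ≤ pY y) (hpY1 : HasSum pY 1)
    (hpXY0 : ∀ y x, 0 ≤ pXY y x) (hpXY1 : ∀ y, HasSum (pXY y) 1)
    (hL0 : ∀ x x', 0 ≤ L x x')
    (hLbar : IsLUB (Set.range fun p : X × X => L p.1 p.2) Lbar)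
    (q : Y → X → ℝ) (hq0 : ∀ y x, 0 ≤ q y x) (hq1 : ∀ y, HasSum (q y) 1)
    (fMAL : Y → X)
    (hMAL : ∀ y x', ∑' x, pXY y x * L x (fMAL y) ≤ ∑' x, pXY y x * L x x') :
    ∑' y, pY y * ∑' xs : Fin (tbar + 1) → X,
        (∏ t : Fin (tbar + 1), q y (xs t))
          * ⨅ t : Fin (tbar + 1), ∑' x, pXY y x * L x (xs t)
      ≤ (∑' y, pY y * ∑' x, pXY y x * L x (fMAL y))
        + Lbar * ∑' y, pY y * (1 - q y (fMAL y)) ^ (tbar + 1) := by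
  classical
  rcases isEmpty_or_nonempty Y with hY | hY
  · simp [tsum_empty]
  have hXne : Nonempty X := by
    by_contra hX
    haveI : IsEmpty X := not_nonempty_iff.mp hX
    have := (hpXY1 (Classical.arbitrary Y)).unique hasSum_empty
    norm_num at this
  obtain ⟨x0⟩ := hXne
  -- basic facts
  have hLle : ∀ x x', L x x' ≤ Lbar := fun x x' => hLbar.1 ⟨(x, x'), rfl⟩
  have hLbar0 : 0 ≤ Lbar := le_trans (hL0 x0 x0) (hLle x0 x0)
  set n := tbar + 1 with hn
  set g : Y → X → ℝ := fun y x' => ∑' x, pXY y x * L x x' with hg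
  have hgsummable : ∀ y x', Summable fun x => pXY y x * L x x' := fun y x' =>
    Summable.of_nonneg_of_le (fun x => mul_nonneg (hpXY0 y x) (hL0 x x'))
      (fun x => mul_le_mul_of_nonneg_left (hLle x x') (hpXY0 y x))
      ((hpXY1 y).summable.mul_right Lbar)
  have hg0 : ∀ y x', 0 ≤ g y x' := fun y x' =>
    tsum_nonneg fun x => mul_nonneg (hpXY0 y x) (hL0 x x')
  have hgle : ∀ y x', g y x' ≤ Lbar := by
    intro y x'
    have h1 : g y x' ≤ ∑' x, pXY y x * Lbar :=
      Summable.tsum_le_tsum (fun x => mul_le_mul_of_nonneg_left (hLle x x') (hpXY0 y x))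
        (hgsummable y x') ((hpXY1 y).summable.mul_right Lbar)
    calc g y x' ≤ ∑' x, pXY y x * Lbar := h1
      _ = (∑' x, pXY y x) * Lbar := tsum_mul_right
      _ = Lbar := by rw [(hpXY1 y).tsum_eq, one_mul]
  have hqle1 : ∀ y, q y (fMAL y) ≤ 1 := fun y =>
    le_hasSum (hq1 y) (fMAL y) (fun j _ => hq0 y j)
  -- pointwise (in y) bound on the inner sum
  have key : ∀ y, ∑' xs : Fin n → X, (∏ t, q y (xs t)) * ⨅ t, g y (xs t)
      ≤ g y (fMAL y) + Lbar * (1 - q y (fMAL y)) ^ n := by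
    intro y
    set f := fMAL y with hf
    set r : X → ℝ := Function.update (q y) f 0 with hr
    have hr0 : ∀ x, 0 ≤ r x := by
      intro x
      by_cases h : x = f <;> simp [hr, h, hq0]
    have hrsum : HasSum r (1 - q y f) := by
      have h := (hq1 y).update f 0
      rw [show (0 : ℝ) - q y f + 1 = 1 - q y f by ring] at h
      exact h
    have hW : HasSum (fun xs : Fin n → X => ∏ t, q y (xs t)) 1 := by
      simpa using hasSum_pi_prod (q y) (hq0 y) (hq1 y) n
    have hR : HasSum (fun xs : Fin n → X => ∏ t, r (xs t)) ((1 - q y f) ^ n) :=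
      hasSum_pi_prod r hr0 hrsum n
    have hWnn : ∀ xs : Fin n → X, 0 ≤ ∏ t, q y (xs t) :=
      fun xs => Finset.prod_nonneg fun t _ => hq0 y _
    have hRnn : ∀ xs : Fin n → X, 0 ≤ ∏ t, r (xs t) :=
      fun xs => Finset.prod_nonneg fun t _ => hr0 _
    -- infimum bounds
    have hbdd : ∀ xs : Fin n → X, BddBelow (Set.range fun t : Fin n => g y (xs t)) :=
      fun xs => ⟨0, fun v ⟨t, ht⟩ => ht ▸ hg0 y (xs t)⟩
    have hinf_le : ∀ (xs : Fin n → X) (t : Fin n), (⨅ t, g y (xs t)) ≤ g y (xs t) :=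
      fun xs t => ciInf_le (hbdd xs) t
    have hinf0 : ∀ xs : Fin n → X, 0 ≤ ⨅ t, g y (xs t) :=
      fun xs => le_ciInf fun t => hg0 y (xs t)
    -- pointwise bound on tuples
    have hpt : ∀ xs : Fin n → X,
        (∏ t, q y (xs t)) * (⨅ t, g y (xs t))
          ≤ (∏ t, q y (xs t)) * g y f + Lbar * ∏ t, r (xs t) := by
      intro xs
      by_cases hmem : ∃ t, xs t = f
      · obtain ⟨t, ht⟩ := hmem
        have hz : r (xs t) = 0 := by simp [hr, ht]
        have hz' : (∏ t', r (xs t')) = 0 :=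
          Finset.prod_eq_zero (Finset.mem_univ t) hz
        rw [hz', mul_zero, add_zero]
        apply mul_le_mul_of_nonneg_left _ (hWnn xs)
        calc (⨅ t, g y (xs t)) ≤ g y (xs t) := hinf_le xs t
          _ = g y f := by rw [ht]
      · push_neg at hmem
        have hre : (∏ t, r (xs t)) = ∏ t, q y (xs t) :=
          Finset.prod_congr rfl fun t _ => by
            simp [hr, Function.update_of_ne (hmem t)]
        rw [hre]
        have t0 : Fin n := ⟨0, Nat.succ_pos tbar⟩
        have h1 : (⨅ t, g y (xs t)) ≤ Lbar := le_trans (hinf_le xs t0) (hgle y _)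
        calc (∏ t, q y (xs t)) * (⨅ t, g y (xs t))
            ≤ (∏ t, q y (xs t)) * Lbar := mul_le_mul_of_nonneg_left h1 (hWnn xs)
          _ = Lbar * ∏ t, q y (xs t) := mul_comm _ _
          _ ≤ (∏ t, q y (xs t)) * g y f + Lbar * ∏ t, q y (xs t) :=
            le_add_of_nonneg_left (mul_nonneg (hWnn xs) (hg0 y f))
    -- summability of the majorant
    have hmaj : Summable (fun xs : Fin n → X =>
        (∏ t, q y (xs t)) * g y f + Lbar * ∏ t, r (xs t)) :=
      (hW.summable.mul_right _).add (hR.summable.mul_left Lbar)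
    have hLHSsummable : Summable (fun xs : Fin n → X =>
        (∏ t, q y (xs t)) * ⨅ t, g y (xs t)) :=
      Summable.of_nonneg_of_le (fun xs => mul_nonneg (hWnn xs) (hinf0 xs)) hpt hmaj
    calc ∑' xs : Fin n → X, (∏ t, q y (xs t)) * ⨅ t, g y (xs t)
        ≤ ∑' xs : Fin n → X, ((∏ t, q y (xs t)) * g y f + Lbar * ∏ t, r (xs t)) :=
          Summable.tsum_le_tsum hpt hLHSsummable hmaj
      _ = g y f + Lbar * (1 - q y f) ^ n := by
          rw [Summable.tsum_add (hW.summable.mul_right _) (hR.summable.mul_left Lbar),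
            tsum_mul_right, tsum_mul_left, hW.tsum_eq, hR.tsum_eq, one_mul]
  -- now sum over y
  set S : Y → ℝ := fun y => ∑' xs : Fin n → X, (∏ t, q y (xs t)) * ⨅ t, g y (xs t) with hS
  have hS0 : ∀ y, 0 ≤ S y := by
    intro y
    apply tsum_nonneg
    intro xs
    exact mul_nonneg (Finset.prod_nonneg fun t _ => hq0 y _)
      (le_ciInf fun t => hg0 y (xs t))
  have hpow01 : ∀ y, 0 ≤ (1 - q y (fMAL y)) ^ n ∧ (1 - q y (fMAL y)) ^ n ≤ 1 := by
    intro y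
    constructor
    · exact pow_nonneg (by linarith [hqle1 y]) n
    · exact pow_le_one₀ (by linarith [hqle1 y]) (by linarith [hq0 y (fMAL y)])
  have hsum1 : Summable fun y => pY y * g y (fMAL y) :=
    Summable.of_nonneg_of_le (fun y => mul_nonneg (hpY0 y) (hg0 y _))
      (fun y => mul_le_mul_of_nonneg_left (hgle y _) (hpY0 y))
      (hpY1.summable.mul_right Lbar)
  have hsum2 : Summable fun y => pY y * (1 - q y (fMAL y)) ^ n :=
    Summable.of_nonneg_of_le (fun y => mul_nonneg (hpY0 y) (hpow01 y).1)
      (fun y => by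
        calc pY y * (1 - q y (fMAL y)) ^ n ≤ pY y * 1 :=
          mul_le_mul_of_nonneg_left (hpow01 y).2 (hpY0 y)
          _ = pY y := mul_one _)
      hpY1.summable
  have hsumRHS : Summable fun y => pY y * g y (fMAL y)
      + Lbar * (pY y * (1 - q y (fMAL y)) ^ n) :=
    hsum1.add (hsum2.mul_left Lbar)
  have hptY : ∀ y, pY y * S y ≤ pY y * g y (fMAL y)
      + Lbar * (pY y * (1 - q y (fMAL y)) ^ n) := by
    intro y
    calc pY y * S y ≤ pY y * (g y (fMAL y) + Lbar * (1 - q y (fMAL y)) ^ n) :=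
        mul_le_mul_of_nonneg_left (key y) (hpY0 y)
      _ = pY y * g y (fMAL y) + Lbar * (pY y * (1 - q y (fMAL y)) ^ n) := by ring
  have hsumLHS : Summable fun y => pY y * S y :=
    Summable.of_nonneg_of_le (fun y => mul_nonneg (hpY0 y) (hS0 y)) hptY hsumRHS
  calc ∑' y, pY y * S y ≤ ∑' y, (pY y * g y (fMAL y)
        + Lbar * (pY y * (1 - q y (fMAL y)) ^ n)) :=
      Summable.tsum_le_tsum hptY hsumLHS hsumRHS
    _ = (∑' y, pY y * g y (fMAL y))
        + Lbar * ∑' y, pY y * (1 - q y (fMAL y)) ^ n := by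
      rw [Summable.tsum_add hsum1 (hsum2.mul_left Lbar), tsum_mul_left]
end

section
/- The error probability of the stochastic decision with the a posteriori distribution is at most twice the error probability of any stochastic decision rule q: Error(p_{X|Y}) ≤ 2 · Error(q), where Error(r) = Σ_y p_Y(y) Σ_x p_{X|Y}(x|y)(1 − r(x|y)). -/
lemma inner_error_bound {X : Type*} [Countable X] (p q : X → ℝ)
    (hp0 : ∀ x, 0 ≤ p x) (hp1 : HasSum p 1)
    (hq0 : ∀ x, 0 ≤ q x) (hq1 : HasSum q 1) :
    ∑' x, p x * (1 - p x) ≤ 2 * ∑' x, p x * (1 - q x) := by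
  have hps : Summable p := hp1.summable
  have hqs : Summable q := hq1.summable
  have hple : ∀ x, p x ≤ 1 := fun x => le_hasSum hp1 x (fun i _ => hp0 i)
  have hqle : ∀ x, q x ≤ 1 := fun x => le_hasSum hq1 x (fun i _ => hq0 i)
  have hp2 : Summable (fun x => p x * p x) :=
    hps.of_nonneg_of_le (fun x => mul_nonneg (hp0 x) (hp0 x))
      (fun x => by nlinarith [hp0 x, hple x])
  have hq2 : Summable (fun x => q x * q x) :=
    hqs.of_nonneg_of_le (fun x => mul_nonneg (hq0 x) (hq0 x))
      (fun x => by nlinarith [hq0 x, hqle x])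
  have hpq : Summable (fun x => p x * q x) :=
    hps.of_nonneg_of_le (fun x => mul_nonneg (hp0 x) (hq0 x))
      (fun x => by nlinarith [hp0 x, hqle x])
  have e1 : ∑' x, p x * (1 - p x) = 1 - ∑' x, p x * p x := by
    rw [show (∑' x, p x * (1 - p x)) = ∑' x, (p x - p x * p x) from
      tsum_congr (fun x => by ring), Summable.tsum_sub hps hp2, hp1.tsum_eq]
  have e2 : ∑' x, p x * (1 - q x) = 1 - ∑' x, p x * q x := by
    rw [show (∑' x, p x * (1 - q x)) = ∑' x, (p x - p x * q x) from
      tsum_congr (fun x => by ring), Summable.tsum_sub hps hpq, hp1.tsum_eq]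
  have hBC : 2 * ∑' x, p x * q x ≤ (∑' x, p x * p x) + ∑' x, q x * q x := by
    have := Summable.tsum_le_tsum (f := fun x => 2 * (p x * q x))
      (g := fun x => p x * p x + q x * q x)
      (fun x => by show 2 * (p x * q x) ≤ p x * p x + q x * q x; nlinarith [sq_nonneg (p x - q x)]) (hpq.mul_left 2) (hp2.add hq2)
    rwa [tsum_mul_left, Summable.tsum_add hp2 hq2] at this
  have hC1 : ∑' x, q x * q x ≤ 1 := by
    rw [← hq1.tsum_eq]
    exact Summable.tsum_le_tsum (fun x => by nlinarith [hq0 x, hqle x]) hq2 hqs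
  rw [e1, e2]
  linarith

/-- The error probability of the stochastic decision with the a posteriori
distribution is at most twice that of any stochastic decision rule. -/
theorem error_posterior_le_two_mul_error_any {X Y : Type*} [Countable X] [Countable Y]
    (pY : Y → ℝ) (pXY : Y → X → ℝ)
    (hpY0 : ∀ y, 0 ≤ pY y) (hpY1 : HasSum pY 1)
    (hpXY0 : ∀ y x, 0 ≤ pXY y x) (hpXY1 : ∀ y, HasSum (pXY y) 1)
    (hmax : ∀ y, ∃ xhat : X, ∀ x, pXY y x ≤ pXY y xhat)
    (q : Y → X → ℝ) (hq0 : ∀ y x, 0 ≤ q y x) (hq1 : ∀ y, HasSum (q y) 1) :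
    ∑' y, pY y * ∑' x, pXY y x * (1 - pXY y x)
      ≤ 2 * ∑' y, pY y * ∑' x, pXY y x * (1 - q y x) := by
  have hple : ∀ y x, pXY y x ≤ 1 := fun y x => le_hasSum (hpXY1 y) x (fun i _ => hpXY0 y i)
  have hqle : ∀ y x, q y x ≤ 1 := fun y x => le_hasSum (hq1 y) x (fun i _ => hq0 y i)
  -- bounds for inner sums with a general kernel r satisfying 0 ≤ r ≤ 1
  have key : ∀ (r : Y → X → ℝ), (∀ y x, 0 ≤ r y x) → (∀ y x, r y x ≤ 1) →
      (∀ y, 0 ≤ ∑' x, pXY y x * (1 - r y x)) ∧ (∀ y, ∑' x, pXY y x * (1 - r y x) ≤ 1) := by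
    intro r hr0 hr1
    refine ⟨fun y => tsum_nonneg (fun x => mul_nonneg (hpXY0 y x) (by linarith [hr1 y x])), fun y => ?_⟩
    conv_rhs => rw [← (hpXY1 y).tsum_eq]
    refine Summable.tsum_le_tsum (fun x => by nlinarith [hpXY0 y x, hr0 y x]) ?_ (hpXY1 y).summable
    exact (hpXY1 y).summable.of_nonneg_of_le
      (fun x => mul_nonneg (hpXY0 y x) (by linarith [hr1 y x]))
      (fun x => by nlinarith [hpXY0 y x, hr0 y x])
  obtain ⟨hSp0, hSp1⟩ := key pXY hpXY0 hple
  obtain ⟨hSq0, hSq1⟩ := key q hq0 hqle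
  have hsumL : Summable (fun y => pY y * ∑' x, pXY y x * (1 - pXY y x)) :=
    hpY1.summable.of_nonneg_of_le
      (fun y => mul_nonneg (hpY0 y) (hSp0 y))
      (fun y => by nlinarith [hpY0 y, hSp0 y, hSp1 y])
  have hsumR : Summable (fun y => pY y * ∑' x, pXY y x * (1 - q y x)) :=
    hpY1.summable.of_nonneg_of_le
      (fun y => mul_nonneg (hpY0 y) (hSq0 y))
      (fun y => by nlinarith [hpY0 y, hSq0 y, hSq1 y])
  rw [← tsum_mul_left]
  refine Summable.tsum_le_tsum (fun y => ?_) hsumL (hsumR.mul_left 2)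
  have := inner_error_bound (pXY y) (q y) (hpXY0 y) (hpXY1 y) (hq0 y) (hq1 y)
  nlinarith [hpY0 y]
end

section
/- For any stochastic decision rule q, Error(q) ≤ 2·Error(f_MAP) + d(q × p_Y, p_{X|Y} × p_Y), where Error(f_MAP) = Σ_y p_Y(y)(1 − max_x p_{X|Y}(x|y)) and d is the total variational distance on 𝒳 × 𝒴. -/
private lemma abs_le_half_tsum_abs {X : Type*} (D : X → ℝ) (hD : Summable D)
    (hs : ∑' x, D x = 0) (b : X) : |D b| ≤ (1 / 2) * ∑' x, |D x| := by
  classical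
  have hDa : Summable (fun x => |D x|) := summable_abs_iff.2 hD
  -- g is D with the b-coordinate removed
  set g : X → ℝ := fun x => if x = b then 0 else D x with hg
  have hgS : Summable g := by
    have h1 : Summable (fun x => if x = b then D b else 0) := (hasSum_ite_eq b (D b)).summable
    have := hD.sub h1
    refine this.congr fun x => ?_
    by_cases h : x = b <;> simp [hg, h]
  have htD : ∑' x, D x = D b + ∑' x, g x := Summable.tsum_eq_add_tsum_ite hD b
  have htA : ∑' x, |D x| = |D b| + ∑' x, if x = b then 0 else |D x| :=
    Summable.tsum_eq_add_tsum_ite hDa b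
  have hgsum : ∑' x, g x = -D b := by rw [htD] at hs; linarith
  have habs : |∑' x, g x| ≤ ∑' x, |g x| := by
    have := norm_tsum_le_tsum_norm (f := g) (by
      refine hDa.of_nonneg_of_le (fun x => abs_nonneg _) fun x => ?_
      by_cases h : x = b <;> simp [hg, h])
    simpa [Real.norm_eq_abs] using this
  have hgabs : (∑' x, |g x|) = ∑' x, if x = b then 0 else |D x| := by
    refine tsum_congr fun x => ?_
    by_cases h : x = b <;> simp [hg, h]
  have : |D b| ≤ ∑' x, if x = b then 0 else |D x| := by
    rw [hgsum] at habs
    rw [hgabs] at habs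
    simpa using habs
  linarith

private lemma key_ineq {X : Type*} (p q : X → ℝ) (hp0 : ∀ x, 0 ≤ p x)
    (hp1 : HasSum p 1) (hq0 : ∀ x, 0 ≤ q x) (hq1 : HasSum q 1) (b : X)
    (hmax : ∀ x, p x ≤ p b) :
    ∑' x, p x * (1 - q x) ≤ 2 * (1 - p b) + (1 / 2) * ∑' x, |q x - p x| := by
  have hpS : Summable p := hp1.summable
  have hqS : Summable q := hq1.summable
  have hq_le1 : ∀ x, q x ≤ 1 := fun x => le_hasSum hq1 x fun j _ => hq0 j
  have hp_le1 : ∀ x, p x ≤ 1 := fun x => le_hasSum hp1 x fun j _ => hp0 j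
  have hpqS : Summable (fun x => p x * q x) := by
    refine hpS.of_nonneg_of_le (fun x => mul_nonneg (hp0 x) (hq0 x)) fun x => ?_
    calc p x * q x ≤ p x * 1 := by
          exact mul_le_mul_of_nonneg_left (hq_le1 x) (hp0 x)
      _ = p x := mul_one _
  have hA : ∑' x, p x * (1 - q x) = 1 - ∑' x, p x * q x := by
    have : ∀ x, p x * (1 - q x) = p x - p x * q x := fun x => by ring
    rw [tsum_congr this, Summable.tsum_sub hpS hpqS, hp1.tsum_eq]
  have hle : p b * q b ≤ ∑' x, p x * q x :=
    le_hasSum hpqS.hasSum b fun j _ => mul_nonneg (hp0 j) (hq0 j)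
  -- variational bound on q b vs p b
  have hDS : Summable (fun x => q x - p x) := hqS.sub hpS
  have hDsum : ∑' x, (q x - p x) = 0 := by
    rw [Summable.tsum_sub hqS hpS, hq1.tsum_eq, hp1.tsum_eq]; ring
  have habs : |q b - p b| ≤ (1 / 2) * ∑' x, |q x - p x| :=
    abs_le_half_tsum_abs _ hDS hDsum b
  have h1 : 1 - ∑' x, p x * q x ≤ 1 - p b * q b := by linarith
  have h2 : 1 - p b * q b ≤ (1 - p b) + (1 - q b) := by nlinarith [hp0 b, hq0 b, hp_le1 b, hq_le1 b]
  have h3 : 1 - q b ≤ (1 - p b) + |q b - p b| := by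
    have := neg_abs_le (q b - p b)
    linarith
  rw [hA]
  linarith

/-- The error probability of any stochastic decision rule is bounded by twice
the error probability of the MAP decision plus the variational distance between
the rule and the a posteriori distribution. -/
theorem error_le_two_mul_MAP_add_variational {X Y : Type*} [Countable X] [Countable Y]
    (pY : Y → ℝ) (pXY : Y → X → ℝ)
    (hpY0 : ∀ y, 0 ≤ pY y) (hpY1 : HasSum pY 1)
    (hpXY0 : ∀ y x, 0 ≤ pXY y x) (hpXY1 : ∀ y, HasSum (pXY y) 1)
    (fMAP : Y → X) (hMAP : ∀ y x, pXY y x ≤ pXY y (fMAP y))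
    (q : Y → X → ℝ) (hq0 : ∀ y x, 0 ≤ q y x) (hq1 : ∀ y, HasSum (q y) 1) :
    ∑' y, pY y * ∑' x, pXY y x * (1 - q y x)
      ≤ 2 * (∑' y, pY y * (1 - pXY y (fMAP y)))
        + (1 / 2) * ∑' z : X × Y, |q z.2 z.1 * pY z.2 - pXY z.2 z.1 * pY z.2| := by
  have hpYS : Summable pY := hpY1.summable
  have hq_le1 : ∀ y x, q y x ≤ 1 := fun y x => le_hasSum (hq1 y) x fun j _ => hq0 y j
  have hp_le1 : ∀ y x, pXY y x ≤ 1 := fun y x => le_hasSum (hpXY1 y) x fun j _ => hpXY0 y j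
  set B : Y → ℝ := fun y => ∑' x, |q y x - pXY y x| with hBdef
  have hDabsS : ∀ y, Summable (fun x => |q y x - pXY y x|) := fun y =>
    summable_abs_iff.2 ((hq1 y).summable.sub (hpXY1 y).summable)
  have hB0 : ∀ y, 0 ≤ B y := fun y => tsum_nonneg fun x => abs_nonneg _
  have hB2 : ∀ y, B y ≤ 2 := by
    intro y
    have hsum : ∑' x, (q y x + pXY y x) = 2 := by
      rw [Summable.tsum_add (hq1 y).summable (hpXY1 y).summable, (hq1 y).tsum_eq, (hpXY1 y).tsum_eq]
      norm_num
    calc B y ≤ ∑' x, (q y x + pXY y x) := by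
          refine Summable.tsum_le_tsum (fun x => ?_) (hDabsS y) ((hq1 y).summable.add (hpXY1 y).summable)
          calc |q y x - pXY y x| ≤ |q y x| + |pXY y x| := abs_sub _ _
            _ = q y x + pXY y x := by rw [abs_of_nonneg (hq0 y x), abs_of_nonneg (hpXY0 y x)]
      _ = 2 := hsum
  set A : Y → ℝ := fun y => ∑' x, pXY y x * (1 - q y x) with hAdef
  have hA0 : ∀ y, 0 ≤ A y := fun y =>
    tsum_nonneg fun x => mul_nonneg (hpXY0 y x) (by linarith [hq_le1 y x])
  have hA1 : ∀ y, A y ≤ 1 := by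
    intro y
    have hle : ∀ x, pXY y x * (1 - q y x) ≤ pXY y x := by
      intro x
      nlinarith [hpXY0 y x, hq0 y x]
    have hAS : Summable (fun x => pXY y x * (1 - q y x)) :=
      (hpXY1 y).summable.of_nonneg_of_le
        (fun x => mul_nonneg (hpXY0 y x) (by linarith [hq_le1 y x])) hle
    calc A y ≤ ∑' x, pXY y x := Summable.tsum_le_tsum hle hAS (hpXY1 y).summable
      _ = 1 := (hpXY1 y).tsum_eq
  -- key per-y inequality
  have hkey : ∀ y, A y ≤ 2 * (1 - pXY y (fMAP y)) + (1 / 2) * B y := fun y =>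
    key_ineq (pXY y) (q y) (hpXY0 y) (hpXY1 y) (hq0 y) (hq1 y) (fMAP y) (hMAP y)
  -- summability of weighted pieces
  have hS1 : Summable (fun y => pY y * A y) :=
    hpYS.of_nonneg_of_le (fun y => mul_nonneg (hpY0 y) (hA0 y))
      (fun y => by nlinarith [hA1 y, hpY0 y])
  have hMAPle : ∀ y, 0 ≤ 1 - pXY y (fMAP y) := fun y => by linarith [hp_le1 y (fMAP y)]
  have hS2 : Summable (fun y => pY y * (1 - pXY y (fMAP y))) :=
    hpYS.of_nonneg_of_le (fun y => mul_nonneg (hpY0 y) (hMAPle y))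
      (fun y => by nlinarith [hMAPle y, hpY0 y, hpXY0 y (fMAP y)])
  have hS3 : Summable (fun y => pY y * B y) :=
    (hpYS.mul_left 2).of_nonneg_of_le (fun y => mul_nonneg (hpY0 y) (hB0 y))
      (fun y => by nlinarith [hB2 y, hpY0 y, hB0 y])
  -- main comparison over y
  have hmain : ∑' y, pY y * A y
      ≤ ∑' y, (2 * (pY y * (1 - pXY y (fMAP y))) + (1 / 2) * (pY y * B y)) := by
    refine Summable.tsum_le_tsum (fun y => ?_) hS1 ((hS2.mul_left 2).add (hS3.mul_left (1 / 2)))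
    have := mul_le_mul_of_nonneg_left (hkey y) (hpY0 y)
    calc pY y * A y ≤ pY y * (2 * (1 - pXY y (fMAP y)) + 1 / 2 * B y) := this
      _ = 2 * (pY y * (1 - pXY y (fMAP y))) + (1 / 2) * (pY y * B y) := by ring
  have hsplit : ∑' y, (2 * (pY y * (1 - pXY y (fMAP y))) + (1 / 2) * (pY y * B y))
      = 2 * (∑' y, pY y * (1 - pXY y (fMAP y))) + (1 / 2) * ∑' y, pY y * B y := by
    rw [Summable.tsum_add (hS2.mul_left 2) (hS3.mul_left (1 / 2)), tsum_mul_left, tsum_mul_left]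
  -- identify the product tsum
  set F : Y × X → ℝ := fun w => |q w.1 w.2 * pY w.1 - pXY w.1 w.2 * pY w.1| with hFdef
  have hFeq : ∀ w : Y × X, F w = |q w.1 w.2 - pXY w.1 w.2| * pY w.1 := by
    intro w
    simp only [hFdef]
    have : q w.1 w.2 * pY w.1 - pXY w.1 w.2 * pY w.1 = (q w.1 w.2 - pXY w.1 w.2) * pY w.1 := by
      ring
    rw [this, abs_mul, abs_of_nonneg (hpY0 w.1)]
  have hFx : ∀ y, Summable (fun x => F (y, x)) := by
    intro y
    have := (hDabsS y).mul_right (pY y)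
    exact this.congr fun x => (hFeq (y, x)).symm
  have hFy : ∀ y, (∑' x, F (y, x)) = pY y * B y := by
    intro y
    calc (∑' x, F (y, x)) = ∑' x, |q y x - pXY y x| * pY y := tsum_congr fun x => hFeq (y, x)
      _ = (∑' x, |q y x - pXY y x|) * pY y := tsum_mul_right
      _ = pY y * B y := mul_comm _ _
  have hFS : Summable F := by
    refine (summable_prod_of_nonneg (fun w => abs_nonneg _)).2 ⟨hFx, ?_⟩
    exact hS3.congr fun y => (hFy y).symm
  have hprod : (∑' z : X × Y, |q z.2 z.1 * pY z.2 - pXY z.2 z.1 * pY z.2|)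
      = ∑' y, pY y * B y := by
    have he : (∑' w : Y × X, F w)
        = ∑' z : X × Y, |q z.2 z.1 * pY z.2 - pXY z.2 z.1 * pY z.2| := by
      exact (Equiv.prodComm Y X).tsum_eq
        (fun z : X × Y => |q z.2 z.1 * pY z.2 - pXY z.2 z.1 * pY z.2|)
    rw [← he, Summable.tsum_prod' hFS hFx]
    exact tsum_congr hFy
  rw [hprod]
  calc ∑' y, pY y * A y
      ≤ ∑' y, (2 * (pY y * (1 - pXY y (fMAP y))) + (1 / 2) * (pY y * B y)) := hmain
    _ = 2 * (∑' y, pY y * (1 - pXY y (fMAP y))) + (1 / 2) * ∑' y, pY y * B y := hsplit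
end

section
/- Suppose X̂₁, …, X̂_{t̄} are, given Y = y, i.i.d. with the a posteriori distribution p_{X|Y}(·|y), conditionally independent of X, and F(y) maximizes p_{X|Y}(·|y) over {X̂₁, …, X̂_{t̄}}. Then the error probability satisfies Error(F) ≤ Error(f_MAP) + Σ_y p_Y(y)·(1 − p_{X|Y}(f_MAP(y)|y))^{t̄} ≤ Error(f_MAP) + (1 − inf_{y : p_Y(y)>0} max_x p_{X|Y}(x|y))^{t̄}. -/
lemma prod_hasSum_aux {X : Type*} (g : X → ℝ) (hg : ∀ x, 0 ≤ g x) {c : ℝ}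
    (hc : HasSum g c) : ∀ n : ℕ, HasSum (fun f : Fin n → X => ∏ i, g (f i)) (c ^ n) := by
  intro n
  induction n with
  | zero =>
    have h := hasSum_single (α := ℝ) (f := fun f : Fin 0 → X => ∏ i, g (f i)) Fin.elim0
      (fun b hb => absurd (Subsingleton.elim b Fin.elim0) hb)
    simpa using h
  | succ n ih =>
    have hs := Summable.mul_of_nonneg (f := g) (g := fun f : Fin n → X => ∏ i, g (f i))
      hc.summable ih.summable (fun x => hg x)
      (fun f => Finset.prod_nonneg fun i _ => hg _)
    have hmul := HasSum.mul (f := g) (g := fun f : Fin n → X => ∏ i, g (f i)) hc ih hs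
    rw [pow_succ']
    refine (Equiv.hasSum_iff (Fin.consEquiv fun _ => X)).mp ?_
    refine hmul.congr_fun ?_
    intro p
    simp [Fin.consEquiv, Fin.prod_univ_succ]

/-- For the stochastic decision maximizing the a posteriori probability over a
conditionally i.i.d. sequence drawn from the a posteriori distribution, the error
probability approaches the MAP error probability exponentially fast. -/
theorem error_seq_iid_posterior {X Y : Type*} [Countable X] [Countable Y]
    (pY : Y → ℝ) (pXY : Y → X → ℝ) (tbar : ℕ)
    (hpY0 : ∀ y, 0 ≤ pY y) (hpY1 : HasSum pY 1)
    (hpXY0 : ∀ y x, 0 ≤ pXY y x) (hpXY1 : ∀ y, HasSum (pXY y) 1)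
    (fMAP : Y → X) (hMAP : ∀ y x, pXY y x ≤ pXY y (fMAP y)) :
    (∑' y, pY y * ∑' xs : Fin (tbar + 1) → X,
        (∏ t : Fin (tbar + 1), pXY y (xs t))
          * (1 - ⨆ t : Fin (tbar + 1), pXY y (xs t)))
      ≤ (∑' y, pY y * (1 - pXY y (fMAP y)))
        + ∑' y, pY y * (1 - pXY y (fMAP y)) ^ (tbar + 1)
    ∧ (∑' y, pY y * (1 - pXY y (fMAP y)))
        + ∑' y, pY y * (1 - pXY y (fMAP y)) ^ (tbar + 1)
      ≤ (∑' y, pY y * (1 - pXY y (fMAP y)))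
        + (1 - ⨅ y : {y : Y // 0 < pY y}, pXY y.1 (fMAP y.1)) ^ (tbar + 1) := by
  classical
  set n := tbar + 1 with hn
  have ha0 : ∀ y, 0 ≤ pXY y (fMAP y) := fun y => hpXY0 y _
  have ha1 : ∀ y, pXY y (fMAP y) ≤ 1 := fun y =>
    le_hasSum (hpXY1 y) (fMAP y) (fun x _ => hpXY0 y x)
  -- per-y pointwise facts
  have hsup_le : ∀ y (xs : Fin n → X), (⨆ t, pXY y (xs t)) ≤ pXY y (fMAP y) :=
    fun y xs => ciSup_le fun t => hMAP y _
  have hsup_ge : ∀ y (xs : Fin n → X), 0 ≤ ⨆ t, pXY y (xs t) := fun y xs =>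
    le_trans (hpXY0 y (xs 0)) (le_ciSup (f := fun t : Fin n => pXY y (xs t)) (Set.finite_range _).bddAbove 0)
  have hL0 : ∀ y (xs : Fin n → X),
      0 ≤ (∏ t, pXY y (xs t)) * (1 - ⨆ t, pXY y (xs t)) := fun y xs =>
    mul_nonneg (Finset.prod_nonneg fun t _ => hpXY0 y _)
      (by have := hsup_le y xs; have := ha1 y; linarith)
  -- key inner estimate
  have key : ∀ y, (∑' xs : Fin n → X, (∏ t, pXY y (xs t)) * (1 - ⨆ t, pXY y (xs t)))
      ≤ (1 - pXY y (fMAP y)) + (1 - pXY y (fMAP y)) ^ n := by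
    intro y
    set a := pXY y (fMAP y) with ha
    set q : X → ℝ := fun x => if x = fMAP y then 0 else pXY y x with hqdef
    have hq0 : ∀ x, 0 ≤ q x := fun x => by
      by_cases hx : x = fMAP y <;> simp [q, hx, hpXY0 y x]
    have hqsum : HasSum q (1 - a) := by
      have h1 : HasSum (fun x => pXY y x - if x = fMAP y then a else 0) (1 - a) :=
        (hpXY1 y).sub (hasSum_ite_eq (fMAP y) a)
      refine h1.congr_fun fun x => ?_
      by_cases hx : x = fMAP y
      · subst hx; simp [q, ha]
      · simp [q, hx]
    have hP : HasSum (fun xs : Fin n → X => ∏ t, pXY y (xs t)) 1 := by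
      simpa using prod_hasSum_aux (pXY y) (hpXY0 y) (hpXY1 y) n
    have hQ : HasSum (fun xs : Fin n → X => ∏ t, q (xs t)) ((1 - a) ^ n) :=
      prod_hasSum_aux q hq0 hqsum n
    have hpt : ∀ xs : Fin n → X,
        (∏ t, pXY y (xs t)) * (1 - ⨆ t, pXY y (xs t))
          ≤ (∏ t, pXY y (xs t)) * (1 - a) + ∏ t, q (xs t) := by
      intro xs
      have hprod0 : 0 ≤ ∏ t, pXY y (xs t) := Finset.prod_nonneg fun t _ => hpXY0 y _
      by_cases hx : ∃ t, xs t = fMAP y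
      · obtain ⟨t0, ht0⟩ := hx
        have h1 : a ≤ ⨆ t, pXY y (xs t) := by
          have := le_ciSup (f := fun t => pXY y (xs t)) (Set.finite_range _).bddAbove t0
          rw [ht0] at this; exact this
        have h2 : 0 ≤ ∏ t, q (xs t) := Finset.prod_nonneg fun t _ => hq0 _
        have h3 : (∏ t, pXY y (xs t)) * (1 - ⨆ t, pXY y (xs t))
            ≤ (∏ t, pXY y (xs t)) * (1 - a) :=
          mul_le_mul_of_nonneg_left (by linarith) hprod0
        linarith
      · push_neg at hx
        have hqp : ∏ t, q (xs t) = ∏ t, pXY y (xs t) :=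
          Finset.prod_congr rfl fun t _ => by simp [q, hx t]
        rw [hqp]
        have h4 := hsup_ge y xs
        have h5 : a ≤ 1 := ha ▸ ha1 y
        have h6 : (∏ t, pXY y (xs t)) * (1 - ⨆ t, pXY y (xs t))
            ≤ (∏ t, pXY y (xs t)) * ((1 - a) + 1) :=
          mul_le_mul_of_nonneg_left (by linarith) hprod0
        rw [mul_add, mul_one] at h6
        exact h6
    have hLsum : Summable (fun xs : Fin n → X =>
        (∏ t, pXY y (xs t)) * (1 - ⨆ t, pXY y (xs t))) := by
      refine Summable.of_nonneg_of_le (hL0 y) (fun xs => ?_) hP.summable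
      exact mul_le_of_le_one_right (Finset.prod_nonneg fun t _ => hpXY0 y _)
        (by have := hsup_ge y xs; linarith)
    have hR : HasSum (fun xs : Fin n → X =>
        (∏ t, pXY y (xs t)) * (1 - a) + ∏ t, q (xs t)) ((1 - a) + (1 - a) ^ n) := by
      have := (hP.mul_right (1 - a)).add hQ
      simpa using this
    calc ∑' xs : Fin n → X, (∏ t, pXY y (xs t)) * (1 - ⨆ t, pXY y (xs t))
        ≤ ∑' xs : Fin n → X, ((∏ t, pXY y (xs t)) * (1 - a) + ∏ t, q (xs t)) :=
          Summable.tsum_le_tsum hpt hLsum hR.summable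
      _ = (1 - a) + (1 - a) ^ n := hR.tsum_eq
  -- nonnegativity of inner sums
  have hinner0 : ∀ y, 0 ≤ ∑' xs : Fin n → X,
      (∏ t, pXY y (xs t)) * (1 - ⨆ t, pXY y (xs t)) := fun y => tsum_nonneg (hL0 y)
  -- summability of outer families
  have h1a0 : ∀ y, 0 ≤ 1 - pXY y (fMAP y) := fun y => by linarith [ha1 y]
  have h1a1 : ∀ y, 1 - pXY y (fMAP y) ≤ 1 := fun y => by linarith [ha0 y]
  have S1 : Summable (fun y => pY y * (1 - pXY y (fMAP y))) := by
    refine Summable.of_nonneg_of_le (fun y => mul_nonneg (hpY0 y) (h1a0 y))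
      (fun y => mul_le_of_le_one_right (hpY0 y) (h1a1 y)) hpY1.summable
  have S2 : Summable (fun y => pY y * (1 - pXY y (fMAP y)) ^ n) := by
    refine Summable.of_nonneg_of_le
      (fun y => mul_nonneg (hpY0 y) (pow_nonneg (h1a0 y) n))
      (fun y => mul_le_of_le_one_right (hpY0 y) (pow_le_one₀ (h1a0 y) (h1a1 y)))
      hpY1.summable
  have Ssum : Summable (fun y => pY y *
      ((1 - pXY y (fMAP y)) + (1 - pXY y (fMAP y)) ^ n)) := by
    refine (S1.add S2).congr fun y => ?_
    ring
  have SL : Summable (fun y => pY y * ∑' xs : Fin n → X,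
      (∏ t, pXY y (xs t)) * (1 - ⨆ t, pXY y (xs t))) := by
    refine Summable.of_nonneg_of_le (fun y => mul_nonneg (hpY0 y) (hinner0 y))
      (fun y => mul_le_mul_of_nonneg_left (key y) (hpY0 y)) Ssum
  constructor
  · calc (∑' y, pY y * ∑' xs : Fin n → X,
          (∏ t, pXY y (xs t)) * (1 - ⨆ t, pXY y (xs t)))
        ≤ ∑' y, pY y * ((1 - pXY y (fMAP y)) + (1 - pXY y (fMAP y)) ^ n) :=
          Summable.tsum_le_tsum (fun y => mul_le_mul_of_nonneg_left (key y) (hpY0 y)) SL Ssum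
      _ = (∑' y, pY y * (1 - pXY y (fMAP y)))
          + ∑' y, pY y * (1 - pXY y (fMAP y)) ^ n := by
          rw [← Summable.tsum_add S1 S2]
          exact tsum_congr fun y => by ring
  · set c := ⨅ y : {y : Y // 0 < pY y}, pXY y.1 (fMAP y.1) with hc
    have hbdd : BddBelow (Set.range fun y : {y : Y // 0 < pY y} => pXY y.1 (fMAP y.1)) := by
      refine ⟨0, ?_⟩
      rintro _ ⟨y, rfl⟩
      exact ha0 y.1
    have hc0 : 0 ≤ c := by
      by_cases h : Nonempty {y : Y // 0 < pY y}
      · exact le_ciInf fun y => ha0 y.1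
      · haveI := not_nonempty_iff.mp h
        rw [hc, Real.iInf_of_isEmpty]
    have hc1 : c ≤ 1 := by
      by_cases h : Nonempty {y : Y // 0 < pY y}
      · obtain ⟨y0⟩ := h
        exact le_trans (ciInf_le hbdd y0) (ha1 y0.1)
      · haveI := not_nonempty_iff.mp h
        rw [hc, Real.iInf_of_isEmpty]; norm_num
    have hcy : ∀ y, 0 < pY y → c ≤ pXY y (fMAP y) := fun y hy => ciInf_le hbdd ⟨y, hy⟩
    have part2 : ∑' y, pY y * (1 - pXY y (fMAP y)) ^ n ≤ (1 - c) ^ n := by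
      have hb : ∀ y, pY y * (1 - pXY y (fMAP y)) ^ n ≤ pY y * (1 - c) ^ n := by
        intro y
        rcases eq_or_lt_of_le (hpY0 y) with h | h
        · simp [← h]
        · exact mul_le_mul_of_nonneg_left
            (pow_le_pow_left₀ (h1a0 y) (by linarith [hcy y h]) n) (le_of_lt h)
      calc ∑' y, pY y * (1 - pXY y (fMAP y)) ^ n
          ≤ ∑' y, pY y * (1 - c) ^ n :=
            Summable.tsum_le_tsum hb S2 (hpY1.summable.mul_right _)
        _ = (1 - c) ^ n := by rw [tsum_mul_right, hpY1.tsum_eq, one_mul]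
    exact add_le_add_right part2 _
end

section
/- If 𝒳 is finite with |𝒳| elements, then inf_{y : p_Y(y)>0} max_x p_{X|Y}(x|y) ≥ 1/|𝒳|, and consequently for the stochastic decision F with a conditionally i.i.d. sequence of length t̄ drawn from the a posteriori distribution, Error(F) ≤ Error(f_MAP) + (1 − 1/|𝒳|)^{t̄}. -/
/-- For a finite alphabet, the infimum over observations of the maximal a
posteriori probability is at least 1/|X|, and hence the error probability of the
stochastic decision with a conditionally i.i.d. sequence from the a posteriori
distribution is bounded by the MAP error plus (1 - 1/|X|)^t̄. -/
theorem error_seq_iid_finite_alphabet {X Y : Type*} [Fintype X] [Countable Y]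
    (pY : Y → ℝ) (pXY : Y → X → ℝ) (tbar : ℕ)
    (hpY0 : ∀ y, 0 ≤ pY y) (hpY1 : HasSum pY 1)
    (hpXY0 : ∀ y x, 0 ≤ pXY y x) (hpXY1 : ∀ y, HasSum (pXY y) 1)
    (fMAP : Y → X) (hMAP : ∀ y x, pXY y x ≤ pXY y (fMAP y)) :
    (1 : ℝ) / Fintype.card X
      ≤ ⨅ y : {y : Y // 0 < pY y}, pXY y.1 (fMAP y.1)
    ∧ (∑' y, pY y * ∑' xs : Fin (tbar + 1) → X,
          (∏ t : Fin (tbar + 1), pXY y (xs t))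
            * (1 - ⨆ t : Fin (tbar + 1), pXY y (xs t)))
        ≤ (∑' y, pY y * (1 - pXY y (fMAP y)))
          + (1 - (1 : ℝ) / Fintype.card X) ^ (tbar + 1) := by
  classical
  -- there is some y with positive probability
  have hy0 : ∃ y, 0 < pY y := by
    by_contra h
    push_neg at h
    have hz : pY = 0 := funext fun y => le_antisymm (h y) (hpY0 y)
    have := hpY1
    rw [hz] at this
    exact one_ne_zero (hasSum_zero.unique this).symm
  obtain ⟨y0, hy0pos⟩ := hy0
  -- X is nonempty
  have hXne : Nonempty X := by
    by_contra h
    have : IsEmpty X := not_nonempty_iff.mp h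
    have := hpXY1 y0
    exact one_ne_zero ((hasSum_empty (f := pXY y0)).unique this).symm
  have hcard : 0 < (Fintype.card X : ℝ) := by
    exact_mod_cast Fintype.card_pos_iff.mpr hXne
  -- sums over X
  have hsum : ∀ y, ∑ x, pXY y x = 1 := fun y =>
    (hasSum_fintype (pXY y)).unique (hpXY1 y)
  have hle1 : ∀ y x, pXY y x ≤ 1 := by
    intro y x
    rw [← hsum y]
    exact Finset.single_le_sum (fun x _ => hpXY0 y x) (Finset.mem_univ x)
  -- MAP probability at least 1/|X|
  have hMlb : ∀ y, (1 : ℝ) / Fintype.card X ≤ pXY y (fMAP y) := by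
    intro y
    rw [div_le_iff₀ hcard]
    calc (1 : ℝ) = ∑ x, pXY y x := (hsum y).symm
      _ ≤ ∑ _x : X, pXY y (fMAP y) := Finset.sum_le_sum fun x _ => hMAP y x
      _ = pXY y (fMAP y) * Fintype.card X := by
          simp [Finset.sum_const, mul_comm, nsmul_eq_mul]
  have hMub : ∀ y, pXY y (fMAP y) ≤ 1 := fun y => hle1 y (fMAP y)
  have hc1 : (1 : ℝ) / Fintype.card X ≤ 1 := le_trans (hMlb y0) (hMub y0)
  have hne : Nonempty {y : Y // 0 < pY y} := ⟨⟨y0, hy0pos⟩⟩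
  constructor
  · exact le_ciInf (fun y => hMlb y.1)
  -- second part
  set T := tbar + 1 with hT
  set c : ℝ := (1 : ℝ) / Fintype.card X with hc
  -- per-y bound on the inner sum
  have key : ∀ y, (∑' xs : Fin T → X,
      (∏ t, pXY y (xs t)) * (1 - ⨆ t, pXY y (xs t)))
      ≤ (1 - pXY y (fMAP y)) + (1 - c) ^ T := by
    intro y
    set M := pXY y (fMAP y) with hM
    set g : X → ℝ := fun x => if pXY y x < M then pXY y x else 0 with hg
    rw [tsum_fintype]
    have step1 : ∀ xs : Fin T → X,
        (∏ t, pXY y (xs t)) * (1 - ⨆ t, pXY y (xs t))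
          ≤ (∏ t, pXY y (xs t)) * (1 - M) + ∏ t, g (xs t) := by
      intro xs
      have hprod0 : 0 ≤ ∏ t, pXY y (xs t) :=
        Finset.prod_nonneg fun t _ => hpXY0 y (xs t)
      by_cases hcase : ∀ t, pXY y (xs t) < M
      · have hgeq : ∏ t, g (xs t) = ∏ t, pXY y (xs t) :=
          Finset.prod_congr rfl fun t _ => by simp [hg, hcase t]
        have hsup0 : (0 : ℝ) ≤ ⨆ t, pXY y (xs t) :=
          le_trans (hpXY0 y (xs 0)) (le_ciSup (f := fun t => pXY y (xs t))
            (Set.Finite.bddAbove (Set.finite_range _)) 0)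
        have heq : (∏ t, pXY y (xs t)) * (1 - M) + ∏ t, pXY y (xs t)
            = (∏ t, pXY y (xs t)) * (2 - M) := by ring
        rw [hgeq, heq]
        exact mul_le_mul_of_nonneg_left (by linarith [hMub y]) hprod0
      · push_neg at hcase
        obtain ⟨t0, ht0⟩ := hcase
        have hMle : M ≤ pXY y (xs t0) := ht0
        have hsup : M ≤ ⨆ t, pXY y (xs t) :=
          le_trans hMle (le_ciSup (f := fun t => pXY y (xs t))
            (Set.Finite.bddAbove (Set.finite_range _)) t0)
        have hg0 : 0 ≤ ∏ t, g (xs t) :=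
          Finset.prod_nonneg fun t _ => by
            by_cases h : pXY y (xs t) < M <;> simp [hg, h, hpXY0]
        have : (∏ t, pXY y (xs t)) * (1 - ⨆ t, pXY y (xs t))
            ≤ (∏ t, pXY y (xs t)) * (1 - M) :=
          mul_le_mul_of_nonneg_left (by linarith) hprod0
        linarith
    calc (∑ xs : Fin T → X, (∏ t, pXY y (xs t)) * (1 - ⨆ t, pXY y (xs t)))
        ≤ ∑ xs : Fin T → X, ((∏ t, pXY y (xs t)) * (1 - M) + ∏ t, g (xs t)) :=
          Finset.sum_le_sum fun xs _ => step1 xs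
      _ = (∑ x, pXY y x) ^ T * (1 - M) + (∑ x, g x) ^ T := by
          rw [Finset.sum_add_distrib, ← Finset.sum_mul, ← Fintype.sum_pow, ← Fintype.sum_pow]
      _ ≤ (1 - M) + (1 - c) ^ T := by
          rw [hsum y, one_pow, one_mul]
          have hgsum_ub : ∑ x, g x ≤ 1 - M := by
            have hpt : ∀ x, g x ≤ (if x = fMAP y then 0 else pXY y x) := by
              intro x
              by_cases h : x = fMAP y
              · simp [hg, h, hM, lt_irrefl]
              · by_cases h2 : pXY y x < M <;> simp [hg, h, h2, hpXY0, le_of_lt]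
            calc ∑ x, g x ≤ ∑ x, (if x = fMAP y then 0 else pXY y x) :=
                  Finset.sum_le_sum fun x _ => hpt x
              _ = (∑ x, pXY y x) - pXY y (fMAP y) := by
                  have hie := Finset.sum_ite_eq' (Finset.univ) (fMAP y) (pXY y)
                  simp only [Finset.mem_univ, if_true] at hie
                  rw [eq_sub_iff_add_eq, ← hie, ← Finset.sum_add_distrib]
                  apply Finset.sum_congr rfl
                  intro x _
                  by_cases h : x = fMAP y <;> simp [h]
              _ = 1 - M := by rw [hsum y]
          have hgsum_lb : 0 ≤ ∑ x, g x :=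
            Finset.sum_nonneg fun x _ => by
              by_cases h : pXY y x < M <;> simp [hg, h, hpXY0]
          have h1 : (∑ x, g x) ^ T ≤ (1 - M) ^ T := pow_le_pow_left₀ hgsum_lb hgsum_ub T
          have h2 : (1 - M) ^ T ≤ (1 - c) ^ T :=
            pow_le_pow_left₀ (by linarith [hMub y]) (by linarith [hMlb y]) T
          linarith
  -- nonnegativity of inner sums
  have hinner0 : ∀ y, 0 ≤ (∑' xs : Fin T → X,
      (∏ t, pXY y (xs t)) * (1 - ⨆ t, pXY y (xs t))) := by
    intro y
    rw [tsum_fintype]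
    apply Finset.sum_nonneg
    intro xs _
    apply mul_nonneg (Finset.prod_nonneg fun t _ => hpXY0 y (xs t))
    have hsup1 : (⨆ t, pXY y (xs t)) ≤ 1 := ciSup_le fun t => hle1 y (xs t)
    linarith
  -- summability facts
  have hpYs : Summable pY := hpY1.summable
  have hgsummable : Summable (fun y => pY y * ((1 - pXY y (fMAP y)) + (1 - c) ^ T)) := by
    apply Summable.of_nonneg_of_le
    · intro y
      apply mul_nonneg (hpY0 y)
      have := hMub y
      have : (0:ℝ) ≤ (1 - c) ^ T := pow_nonneg (by linarith) T
      linarith [hMub y]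
    · intro y
      have h1 : (1 - pXY y (fMAP y)) + (1 - c) ^ T ≤ 2 := by
        have h2 : (1 - c) ^ T ≤ 1 ^ T := pow_le_pow_left₀ (by linarith [hMlb y0, hMub y0]) (by
          have : (0:ℝ) < c := div_pos one_pos hcard
          linarith) T
        have := hMlb y
        have hc0 : (0:ℝ) < c := div_pos one_pos hcard
        simp only [one_pow] at h2
        linarith
      calc pY y * ((1 - pXY y (fMAP y)) + (1 - c) ^ T) ≤ pY y * 2 :=
            mul_le_mul_of_nonneg_left h1 (hpY0 y)
        _ = 2 * pY y := mul_comm _ _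
    · exact hpYs.mul_left 2
  have hfle : ∀ y, pY y * (∑' xs : Fin T → X,
      (∏ t, pXY y (xs t)) * (1 - ⨆ t, pXY y (xs t)))
      ≤ pY y * ((1 - pXY y (fMAP y)) + (1 - c) ^ T) := fun y =>
    mul_le_mul_of_nonneg_left (key y) (hpY0 y)
  have hfsummable : Summable (fun y => pY y * (∑' xs : Fin T → X,
      (∏ t, pXY y (xs t)) * (1 - ⨆ t, pXY y (xs t)))) :=
    Summable.of_nonneg_of_le (fun y => mul_nonneg (hpY0 y) (hinner0 y)) hfle hgsummable
  have hmain := Summable.tsum_le_tsum hfle hfsummable hgsummable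
  have hsplit : (∑' y, pY y * ((1 - pXY y (fMAP y)) + (1 - c) ^ T))
      = (∑' y, pY y * (1 - pXY y (fMAP y))) + (1 - c) ^ T := by
    have h1 : Summable (fun y => pY y * (1 - pXY y (fMAP y))) := by
      apply Summable.of_nonneg_of_le
      · intro y
        exact mul_nonneg (hpY0 y) (by linarith [hMub y])
      · intro y
        calc pY y * (1 - pXY y (fMAP y)) ≤ pY y * 1 :=
              mul_le_mul_of_nonneg_left (by linarith [hMlb y, div_pos (one_pos) hcard]) (hpY0 y)
          _ = pY y := mul_one _
      · exact hpYs
    have h2 : HasSum (fun y => pY y * (1 - c) ^ T) ((1 - c) ^ T) := by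
      simpa using hpY1.mul_right ((1 - c) ^ T)
    calc (∑' y, pY y * ((1 - pXY y (fMAP y)) + (1 - c) ^ T))
        = ∑' y, (pY y * (1 - pXY y (fMAP y)) + pY y * (1 - c) ^ T) := by
          congr 1; funext y; ring
      _ = (∑' y, pY y * (1 - pXY y (fMAP y))) + ∑' y, pY y * (1 - c) ^ T :=
          Summable.tsum_add h1 h2.summable
      _ = (∑' y, pY y * (1 - pXY y (fMAP y))) + (1 - c) ^ T := by rw [h2.tsum_eq]
  rw [hsplit] at hmain
  exact hmain
end
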